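/- arXiv:2001.04058 — 5 statements merged into one kernel-verified Lean document; each statement's English description precedes it below -/
import Mathlib

section
/- Let (Ω, μ) be a measure space, let η : ℝ → ℝ be nondecreasing with η(0) = 0, and let v : Ω → ℝ be measurable such that x ↦ η(v(x))·v(x) is integrable with ∫_Ω η(v(x))·v(x) dμ(x) ≤ C₀ for some constant C₀ ≥ 0. Then for every M > 0 and every measurable set A ⊆ Ω of finite measure, ∫_A |η(v(x))| dμ(x) ≤ C₀/M + γ(M)·μ(A), where γ(M) := max(η(M), −η(−M)). -/
/-!
Pointwise, `|η s| ≤ η s * s / M` where `|s| ≥ M` (there `η s` has the sign of `s`), and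
`|η s| ≤ γ(M) := max (η M) (-η (-M))` where `|s| ≤ M` (monotonicity). Since `η s * s ≥ 0`,
`|η s| ≤ η s * s / M + γ(M)` everywhere; integrate over `A` and enlarge the first term to the
integral over the whole space.
-/

open MeasureTheory

namespace Monotone

variable {η : ℝ → ℝ}

lemma mul_self_nonneg_of_map_zero (hη : Monotone η) (hη0 : η 0 = 0) (s : ℝ) :
    0 ≤ η s * s := by
  rcases le_total 0 s with hs | hs
  · exact mul_nonneg (hη0 ▸ hη hs) hs
  · exact mul_nonneg_of_nonpos_of_nonpos (hη0 ▸ hη hs) hs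

lemma abs_le_max_of_abs_le (hη : Monotone η) {s M : ℝ} (hs : |s| ≤ M) :
    |η s| ≤ max (η M) (-η (-M)) :=
  abs_le.mpr ⟨neg_le.mp ((neg_le_neg (hη (neg_le_of_abs_le hs))).trans (le_max_right _ _)),
    (hη (le_of_abs_le hs)).trans (le_max_left _ _)⟩

lemma abs_mul_le_mul_self_of_le_abs (hη : Monotone η) (hη0 : η 0 = 0) {s M : ℝ}
    (hs : M ≤ |s|) : |η s| * M ≤ η s * s := by
  rcases le_total 0 s with hs0 | hs0
  · have hηs : 0 ≤ η s := hη0 ▸ hη hs0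
    rw [abs_of_nonneg hηs]
    exact mul_le_mul_of_nonneg_left (abs_of_nonneg hs0 ▸ hs) hηs
  · have hηs : η s ≤ 0 := hη0 ▸ hη hs0
    rw [abs_of_nonpos hs0] at hs
    rw [abs_of_nonpos hηs]
    nlinarith

lemma abs_le_mul_self_div_add_max (hη : Monotone η) (hη0 : η 0 = 0) {M : ℝ} (hM : 0 < M)
    (s : ℝ) : |η s| ≤ η s * s / M + max (η M) (-η (-M)) := by
  rcases le_total |s| M with hs | hs
  · have := div_nonneg (hη.mul_self_nonneg_of_map_zero hη0 s) hM.le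
    linarith [hη.abs_le_max_of_abs_le hs]
  · have := (le_div_iff₀ hM).mpr (hη.abs_mul_le_mul_self_of_le_abs hη0 hs)
    have : 0 ≤ max (η M) (-η (-M)) := (abs_nonneg _).trans (hη.abs_le_max_of_abs_le (abs_of_pos hM).le)
    linarith

theorem setIntegral_abs_comp_le {Ω : Type*} [MeasurableSpace Ω] {μ : Measure Ω}
    (hη : Monotone η) (hη0 : η 0 = 0) {v : Ω → ℝ}
    (hint : Integrable (fun x => η (v x) * v x) μ) {M : ℝ} (hM : 0 < M) {A : Set Ω}
    (hA : μ A < ⊤) :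
    ∫ x in A, |η (v x)| ∂μ ≤
      (∫ x, η (v x) * v x ∂μ) / M + max (η M) (-η (-M)) * (μ A).toReal := by
  have : IsFiniteMeasure (μ.restrict A) := ⟨by simpa using hA⟩
  have hintA : Integrable (fun x => η (v x) * v x / M) (μ.restrict A) :=
    hint.restrict.div_const M
  calc ∫ x in A, |η (v x)| ∂μ
      ≤ ∫ x in A, (η (v x) * v x / M + max (η M) (-η (-M))) ∂μ :=
        integral_mono_of_nonneg (.of_forall fun _ => abs_nonneg _)
          (hintA.add (integrable_const _))
          (.of_forall fun x => hη.abs_le_mul_self_div_add_max hη0 hM (v x))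
    _ = (∫ x in A, η (v x) * v x ∂μ) / M + max (η M) (-η (-M)) * (μ A).toReal := by
        rw [integral_add hintA (integrable_const _), integral_div, setIntegral_const,
          smul_eq_mul, mul_comm, Measure.real]
    _ ≤ (∫ x, η (v x) * v x ∂μ) / M + max (η M) (-η (-M)) * (μ A).toReal := by
        gcongr ?_ / M + _
        exact setIntegral_le_integral hint
          (.of_forall fun x => hη.mul_self_nonneg_of_map_zero hη0 (v x))

end Monotone

theorem stmt_1_general {Ω : Type*} [MeasurableSpace Ω] (μ : Measure Ω)
    (η : ℝ → ℝ) (hη : Monotone η) (hη0 : η 0 = 0)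
    (v : Ω → ℝ)
    (C₀ : ℝ)
    (hint : Integrable (fun x => η (v x) * v x) μ)
    (hbound : ∫ x, η (v x) * v x ∂μ ≤ C₀)
    (M : ℝ) (hM : 0 < M) (A : Set Ω) (hAfin : μ A < ⊤) :
    ∫ x in A, |η (v x)| ∂μ ≤ C₀ / M + max (η M) (-η (-M)) * (μ A).toReal :=
  (hη.setIntegral_abs_comp_le hη0 hint hM hAfin).trans (by gcongr)

/-- If `η` is nondecreasing with `η 0 = 0` and `∫ η(v) · v ≤ C₀`, then for any
measurable set `A` of finite measure and any `M > 0`,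
`∫_A |η (v x)| ≤ C₀ / M + γ(M) · μ(A)` where `γ(M) = max (η M) (-η (-M))`. -/
theorem stmt_1 {Ω : Type*} [MeasurableSpace Ω] (μ : Measure Ω)
    (η : ℝ → ℝ) (hη : Monotone η) (hη0 : η 0 = 0)
    (v : Ω → ℝ) (hv : Measurable v)
    (C₀ : ℝ) (hC₀ : 0 ≤ C₀)
    (hint : Integrable (fun x => η (v x) * v x) μ)
    (hbound : ∫ x, η (v x) * v x ∂μ ≤ C₀)
    (M : ℝ) (hM : 0 < M) (A : Set Ω) (hA : MeasurableSet A) (hAfin : μ A < ⊤) :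
    ∫ x in A, |η (v x)| ∂μ ≤ C₀ / M + max (η M) (-η (-M)) * (μ A).toReal :=
  stmt_1_general μ η hη hη0 v C₀ hint hbound M hM A hAfin
end

section
/- Let (Ω, μ) be a measure space, let η : ℝ → ℝ be continuous and nondecreasing with η(0) = 0, and let (v_k)_{k∈ℕ} be a sequence of measurable functions Ω → ℝ such that x ↦ η(v_k(x))·v_k(x) is integrable and ∫_Ω η(v_k(x))·v_k(x) dμ(x) ≤ C₀ for every k, where C₀ ≥ 0 is a constant independent of k. Then the family {η ∘ v_k : k ∈ ℕ} is uniformly integrable: for every ε > 0 there exists δ > 0 such that for every measurable set A ⊆ Ω with μ(A) ≤ δ and every k ∈ ℕ, ∫_A |η(v_k(x))| dμ(x) ≤ ε. -/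
open MeasureTheory

/-!
Split `η(v_k)` according to whether `|v_k| ≤ 1/c`. Where it is, monotonicity gives
`|η(v_k)| ≤ max (η (1/c)) (-η (-1/c))`; elsewhere `|η(v_k)| ≤ c · η(v_k) v_k`. Hence
`∫_A |η(v_k)| ≤ B_c μ(A) + c C₀`: first choose `c` to make the second term small, then `δ`
to make the first one small.
-/

section Monotone

variable {η : ℝ → ℝ}

theorem Monotone.mul_self_nonneg_of_map_zero_s2 (hη : Monotone η) (hη0 : η 0 = 0) (s : ℝ) :
    0 ≤ η s * s := by
  rcases le_total 0 s with hs | hs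
  · exact mul_nonneg (hη0 ▸ hη hs) hs
  · exact mul_nonneg_of_nonpos_of_nonpos (hη0 ▸ hη hs) hs

theorem Monotone.abs_le_max_add_mul (hη : Monotone η) (hη0 : η 0 = 0) {c : ℝ} (hc : 0 < c)
    (s : ℝ) : |η s| ≤ max (η c⁻¹) (-η (-c⁻¹)) + c * (η s * s) := by
  have hmul := hη.mul_self_nonneg_of_map_zero_s2 hη0 s
  rcases le_or_gt |s| c⁻¹ with hs | hs
  · have hbound : |η s| ≤ max (η c⁻¹) (-η (-c⁻¹)) := by
      obtain ⟨hlo, hhi⟩ := abs_le.mp hs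
      rw [abs_le]
      constructor
      · linarith [hη hlo, le_max_right (η c⁻¹) (-η (-c⁻¹))]
      · exact (hη hhi).trans (le_max_left _ _)
    linarith [mul_nonneg hc.le hmul]
  · have hmax : 0 ≤ max (η c⁻¹) (-η (-c⁻¹)) :=
      (hη0 ▸ hη (inv_pos.mpr hc).le).trans (le_max_left _ _)
    have hcs : 1 ≤ c * |s| := ((inv_lt_iff_one_lt_mul₀' hc).mp hs).le
    have hlarge : |η s| ≤ c * (η s * s) := by
      rw [← abs_of_nonneg hmul, abs_mul]
      nlinarith [abs_nonneg (η s)]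
    linarith

end Monotone

section UniformIntegrability

variable {Ω : Type*} [MeasurableSpace Ω] {μ : Measure Ω}

theorem setIntegral_abs_le_of_abs_le_const_add_mul {f g : Ω → ℝ} {A : Set Ω} (hA : μ A < ⊤)
    (hf : AEStronglyMeasurable f μ) (hg : Integrable g μ) (hg0 : 0 ≤ g) {B c : ℝ} (hc : 0 ≤ c)
    (hfg : ∀ x, |f x| ≤ B + c * g x) :
    ∫ x in A, |f x| ∂μ ≤ B * μ.real A + c * ∫ x, g x ∂μ := by
  have : IsFiniteMeasure (μ.restrict A) := ⟨by rwa [Measure.restrict_apply_univ]⟩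
  have hdom : Integrable (fun x => B + c * g x) (μ.restrict A) :=
    (integrable_const B).add (hg.restrict.const_mul c)
  have habs : Integrable (fun x => |f x|) (μ.restrict A) :=
    hdom.mono' hf.norm.restrict (Filter.Eventually.of_forall fun x => by
      simpa only [Real.norm_eq_abs, abs_abs] using hfg x)
  calc ∫ x in A, |f x| ∂μ ≤ ∫ x in A, B + c * g x ∂μ := integral_mono habs hdom hfg
    _ = B * μ.real A + c * ∫ x in A, g x ∂μ := by
      rw [integral_add (integrable_const B) (hg.restrict.const_mul c), integral_const,
        integral_const_mul, smul_eq_mul, measureReal_restrict_apply_univ, mul_comm]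
    _ ≤ B * μ.real A + c * ∫ x, g x ∂μ := by
      have := setIntegral_le_integral (s := A) hg (Filter.Eventually.of_forall hg0)
      gcongr

theorem setIntegral_abs_le_of_forall_abs_le_const_add_mul {ι : Type*} {f g : ι → Ω → ℝ}
    (hf : ∀ i, AEStronglyMeasurable (f i) μ) (hg : ∀ i, Integrable (g i) μ)
    (hg0 : ∀ i, 0 ≤ g i) {C : ℝ} (hC : ∀ i, ∫ x, g i x ∂μ ≤ C)
    (hdom : ∀ c > (0 : ℝ), ∃ B : ℝ, ∀ i x, |f i x| ≤ B + c * g i x) :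
    ∀ ε > (0 : ℝ), ∃ δ > (0 : ℝ), ∀ A : Set Ω, μ A ≤ ENNReal.ofReal δ →
      ∀ i, ∫ x in A, |f i x| ∂μ ≤ ε := by
  intro ε hε
  set C' := max C 1
  have hC' : 0 < C' := zero_lt_one.trans_le (le_max_right _ _)
  obtain ⟨B, hB⟩ := hdom (ε / (2 * C')) (by positivity)
  set B' := max B 1
  have hB' : 0 < B' := zero_lt_one.trans_le (le_max_right _ _)
  refine ⟨ε / (2 * B'), by positivity, fun A hA i => ?_⟩
  have hAreal : μ.real A ≤ ε / (2 * B') := ENNReal.toReal_le_of_le_ofReal (by positivity) hA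
  have hsmall : B * μ.real A ≤ ε / 2 := calc
    B * μ.real A ≤ B' * (ε / (2 * B')) :=
      mul_le_mul (le_max_left _ _) hAreal measureReal_nonneg hB'.le
    _ = ε / 2 := by field_simp
  have hlarge : ε / (2 * C') * ∫ x, g i x ∂μ ≤ ε / 2 := calc
    ε / (2 * C') * ∫ x, g i x ∂μ ≤ ε / (2 * C') * C' :=
      mul_le_mul_of_nonneg_left ((hC i).trans (le_max_left _ _)) (by positivity)
    _ = ε / 2 := by field_simp
  have := setIntegral_abs_le_of_abs_le_const_add_mul
    (hA.trans_lt ENNReal.ofReal_lt_top) (hf i) (hg i) (hg0 i) (by positivity) (hB i)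
  linarith

end UniformIntegrability

theorem stmt_2_general {Ω : Type*} [MeasurableSpace Ω] (μ : Measure Ω)
    (η : ℝ → ℝ) (hη : Monotone η) (hη0 : η 0 = 0)
    (v : ℕ → Ω → ℝ) (hv : ∀ k, Measurable (v k))
    (C₀ : ℝ)
    (hint : ∀ k, Integrable (fun x => η (v k x) * v k x) μ)
    (hbound : ∀ k, ∫ x, η (v k x) * v k x ∂μ ≤ C₀) :
    ∀ ε > (0 : ℝ), ∃ δ > (0 : ℝ), ∀ A : Set Ω, MeasurableSet A →
      μ A ≤ ENNReal.ofReal δ → ∀ k, ∫ x in A, |η (v k x)| ∂μ ≤ ε := by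
  intro ε hε
  obtain ⟨δ, hδ, hA⟩ := setIntegral_abs_le_of_forall_abs_le_const_add_mul
    (f := fun k x => η (v k x)) (fun k => (hη.measurable.comp (hv k)).aestronglyMeasurable)
    hint (fun k x => hη.mul_self_nonneg_of_map_zero_s2 hη0 (v k x)) hbound
    (fun c hc => ⟨_, fun k x => hη.abs_le_max_add_mul hη0 hc (v k x)⟩) ε hε
  exact ⟨δ, hδ, fun A _ hμA k => hA A hμA k⟩

/-- Uniform integrability of the family `η ∘ v_k` when
`∫ η(v_k) · v_k ≤ C₀` uniformly in `k`, for `η` continuous, nondecreasing,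
with `η 0 = 0`. -/
theorem stmt_2 {Ω : Type*} [MeasurableSpace Ω] (μ : Measure Ω)
    (η : ℝ → ℝ) (hηc : Continuous η) (hη : Monotone η) (hη0 : η 0 = 0)
    (v : ℕ → Ω → ℝ) (hv : ∀ k, Measurable (v k))
    (C₀ : ℝ) (hC₀ : 0 ≤ C₀)
    (hint : ∀ k, Integrable (fun x => η (v k x) * v k x) μ)
    (hbound : ∀ k, ∫ x, η (v k x) * v k x ∂μ ≤ C₀) :
    ∀ ε > (0 : ℝ), ∃ δ > (0 : ℝ), ∀ A : Set Ω, MeasurableSet A →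
      μ A ≤ ENNReal.ofReal δ → ∀ k, ∫ x in A, |η (v k x)| ∂μ ≤ ε :=
  stmt_2_general μ η hη hη0 v hv C₀ hint hbound
end

section
/- Let (Ω, μ) be a finite measure space, let φ : ℝ → ℝ be continuous and nonnegative, and let v : Ω → ℝ be measurable such that ∫_Ω φ(v(x))²·v(x)² dμ(x) ≤ F² for some constant F ≥ 0. Then φ ∘ v belongs to L²(μ) and ∫_Ω φ(v(x))² dμ(x) ≤ F² + γ·μ(Ω), where γ := sup{φ(s)² : s ∈ [−1,1]} (which is finite by continuity of φ). -/
open MeasureTheory Set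

theorem le_mul_sq_add_sSup_image_Icc {ψ : ℝ → ℝ} (hψ : ∀ s, 0 ≤ ψ s)
    (hbdd : BddAbove (ψ '' Icc (-1) 1)) (t : ℝ) :
    ψ t ≤ ψ t * t ^ 2 + sSup (ψ '' Icc (-1) 1) := by
  have hle_sSup : ∀ s ∈ Icc (-1 : ℝ) 1, ψ s ≤ sSup (ψ '' Icc (-1) 1) :=
    fun s hs => le_csSup hbdd (mem_image_of_mem ψ hs)
  rcases le_or_gt |t| 1 with ht | ht
  · nlinarith [hle_sSup t (abs_le.1 ht), mul_nonneg (hψ t) (sq_nonneg t)]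
  · have ht2 : 1 ≤ t ^ 2 := one_le_sq_iff_one_le_abs t |>.2 ht.le
    nlinarith [hle_sSup 0 ⟨by norm_num, by norm_num⟩, hψ t, hψ 0]

section

variable {Ω : Type*} [MeasurableSpace Ω] {μ : Measure Ω} [IsFiniteMeasure μ]
  {f g : Ω → ℝ} {c : ℝ}

theorem integrable_of_le_add_const (hf : AEStronglyMeasurable f μ) (hf0 : ∀ x, 0 ≤ f x)
    (hg : Integrable g μ) (hfg : ∀ x, f x ≤ g x + c) : Integrable f μ :=
  (hg.add (integrable_const c)).mono' hf <|
    ae_of_all _ fun x => (Real.norm_of_nonneg (hf0 x)).trans_le (hfg x)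

theorem integral_le_integral_add_const (hf : Integrable f μ) (hg : Integrable g μ)
    (hfg : ∀ x, f x ≤ g x + c) : ∫ x, f x ∂μ ≤ ∫ x, g x ∂μ + c * μ.real univ :=
  calc ∫ x, f x ∂μ ≤ ∫ x, (g x + c) ∂μ := integral_mono hf (hg.add (integrable_const c)) hfg
    _ = ∫ x, g x ∂μ + c * μ.real univ := by
      rw [integral_add hg (integrable_const c), integral_const, smul_eq_mul, mul_comm]

end

theorem stmt_3_general {Ω : Type*} [MeasurableSpace Ω] (μ : Measure Ω) [IsFiniteMeasure μ]
    (φ : ℝ → ℝ) (hφc : Continuous φ)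
    (v : Ω → ℝ) (hv : Measurable v)
    (F : ℝ)
    (hint : Integrable (fun x => (φ (v x)) ^ 2 * (v x) ^ 2) μ)
    (hbound : ∫ x, (φ (v x)) ^ 2 * (v x) ^ 2 ∂μ ≤ F ^ 2) :
    MemLp (fun x => φ (v x)) 2 μ ∧
      ∫ x, (φ (v x)) ^ 2 ∂μ ≤
        F ^ 2 + sSup ((fun s => (φ s) ^ 2) '' Set.Icc (-1 : ℝ) 1) *
          (μ Set.univ).toReal := by
  have hbdd : BddAbove ((fun s => (φ s) ^ 2) '' Icc (-1 : ℝ) 1) :=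
    (isCompact_Icc.image (hφc.pow 2)).bddAbove
  have hpointwise (x : Ω) := le_mul_sq_add_sSup_image_Icc (fun s => sq_nonneg (φ s)) hbdd (v x)
  have hmeas : AEStronglyMeasurable (fun x => φ (v x)) μ :=
    (hφc.measurable.comp hv).aestronglyMeasurable
  have hint_sq : Integrable (fun x => (φ (v x)) ^ 2) μ :=
    integrable_of_le_add_const (hmeas.pow 2) (fun x => sq_nonneg _) hint hpointwise
  refine ⟨(memLp_two_iff_integrable_sq hmeas).2 hint_sq, ?_⟩
  have := integral_le_integral_add_const hint_sq hint hpointwise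
  rw [measureReal_def] at this
  linarith

/-- If `φ` is continuous and nonnegative and `∫ φ(v)² v² ≤ F²` on a finite
measure space, then `φ ∘ v ∈ L²` with
`∫ φ(v)² ≤ F² + γ · μ(Ω)`, where `γ = sup {φ(s)² : s ∈ [-1,1]}`. -/
theorem stmt_3 {Ω : Type*} [MeasurableSpace Ω] (μ : Measure Ω) [IsFiniteMeasure μ]
    (φ : ℝ → ℝ) (hφc : Continuous φ) (hφ : ∀ s, 0 ≤ φ s)
    (v : Ω → ℝ) (hv : Measurable v)
    (F : ℝ) (hF : 0 ≤ F)
    (hint : Integrable (fun x => (φ (v x)) ^ 2 * (v x) ^ 2) μ)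
    (hbound : ∫ x, (φ (v x)) ^ 2 * (v x) ^ 2 ∂μ ≤ F ^ 2) :
    MemLp (fun x => φ (v x)) 2 μ ∧
      ∫ x, (φ (v x)) ^ 2 ∂μ ≤
        F ^ 2 + sSup ((fun s => (φ s) ^ 2) '' Set.Icc (-1 : ℝ) 1) *
          (μ Set.univ).toReal :=
  stmt_3_general μ φ hφc v hv F hint hbound
end

section
/- Let T > 0, let g : ℝ → ℝ be continuous and nonnegative on [0,T], and let A ≥ 0 be a constant. Define ξ(t) := ∫₀^t g(s) ds. If g(t)² ≤ 2·A·ξ(t) for all t ∈ [0,T], then ξ(t) ≤ A·t²/2 for all t ∈ [0,T]. -/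
open MeasureTheory intervalIntegral

/-- Nonlinear Gronwall-type inequality: if `g` is continuous and nonnegative
on `[0,T]`, `ξ t = ∫₀ᵗ g`, and `g(t)² ≤ 2 A ξ(t)` on `[0,T]`, then
`ξ(t) ≤ A t² / 2` on `[0,T]`. -/
theorem stmt_9 (T : ℝ) (hT : 0 < T)
    (g : ℝ → ℝ) (hgc : ContinuousOn g (Set.Icc 0 T))
    (hgnn : ∀ t ∈ Set.Icc (0 : ℝ) T, 0 ≤ g t)
    (A : ℝ) (hA : 0 ≤ A)
    (hineq : ∀ t ∈ Set.Icc (0 : ℝ) T,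
      (g t) ^ 2 ≤ 2 * A * ∫ s in (0 : ℝ)..t, g s) :
    ∀ t ∈ Set.Icc (0 : ℝ) T, (∫ s in (0 : ℝ)..t, g s) ≤ A * t ^ 2 / 2 := by
  set ξ : ℝ → ℝ := fun t => ∫ s in (0:ℝ)..t, g s with hξdef
  -- integrability on subintervals
  have hInt : ∀ t ∈ Set.Icc (0:ℝ) T, IntervalIntegrable g volume 0 t := by
    intro t ht
    apply (hgc.mono ?_).intervalIntegrable
    rw [Set.uIcc_of_le ht.1]
    exact Set.Icc_subset_Icc le_rfl ht.2
  -- ξ is continuous on [0,T]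
  have hξc : ContinuousOn ξ (Set.Icc 0 T) := by
    have h := intervalIntegral.continuousOn_primitive_interval
      (f := g) (μ := volume) (a := 0) (b := T)
      (by
        rw [Set.uIcc_of_le hT.le]
        exact (hgc.mono subset_rfl).integrableOn_compact isCompact_Icc)
    rwa [Set.uIcc_of_le hT.le] at h
  -- ξ is nonnegative
  have hξnn : ∀ t ∈ Set.Icc (0:ℝ) T, 0 ≤ ξ t := by
    intro t ht
    exact intervalIntegral.integral_nonneg ht.1
      (fun s hs => hgnn s ⟨hs.1, hs.2.trans ht.2⟩)
  -- derivative on the interior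
  have hξd : ∀ t ∈ Set.Ioo (0:ℝ) T, HasDerivAt ξ (g t) t := by
    intro t ht
    have hct : ContinuousAt g t :=
      hgc.continuousAt (Icc_mem_nhds ht.1 ht.2)
    have hmeas : StronglyMeasurableAtFilter g (nhds t) volume :=
      ContinuousOn.stronglyMeasurableAtFilter isOpen_Ioo
        (hgc.mono Set.Ioo_subset_Icc_self) t ht
    exact intervalIntegral.integral_hasDerivAt_right
      (hInt t ⟨ht.1.le, ht.2.le⟩) hmeas hct
  have hξ0 : ξ 0 = 0 := intervalIntegral.integral_same
  -- main estimate with ε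
  have key : ∀ ε : ℝ, 0 < ε → ∀ t ∈ Set.Icc (0:ℝ) T,
      ξ t ≤ A * t ^ 2 / 2 + Real.sqrt (2 * A) * t * Real.sqrt ε + ε := by
    intro ε hε t ht
    set u : ℝ → ℝ := fun s => ξ s + ε with hu
    have hupos : ∀ s ∈ Set.Icc (0:ℝ) T, 0 < u s := by
      intro s hs; have := hξnn s hs; simp only [hu]; linarith
    set F : ℝ → ℝ := fun s => Real.sqrt (A / 2) * s - Real.sqrt (u s) with hF
    have hFderiv : ∀ s ∈ Set.Ioo (0:ℝ) T,
        HasDerivAt F (Real.sqrt (A/2) - g s / (2 * Real.sqrt (u s))) s := by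
      intro s hs
      have hds : HasDerivAt u (g s) s := (hξd s hs).add_const ε
      have hus : 0 < u s := hupos s ⟨hs.1.le, hs.2.le⟩
      have hsq : HasDerivAt (fun x => Real.sqrt (u x))
          (g s / (2 * Real.sqrt (u s))) s :=
        (Real.hasDerivAt_sqrt hus.ne').comp s hds |>.congr_deriv (by ring)
      have hlin : HasDerivAt (fun x : ℝ => Real.sqrt (A/2) * x)
          (Real.sqrt (A/2)) s := by
        simpa using (hasDerivAt_id s).const_mul (Real.sqrt (A/2))
      exact hlin.sub hsq
    have hFmono : MonotoneOn F (Set.Icc 0 T) := by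
      apply monotoneOn_of_deriv_nonneg (convex_Icc 0 T)
      · exact (continuousOn_const.mul continuousOn_id).sub
          ((hξc.add continuousOn_const).sqrt)
      · rw [interior_Icc]
        exact fun s hs => (hFderiv s hs).differentiableAt.differentiableWithinAt
      · rw [interior_Icc]
        intro s hs
        have hsmem : s ∈ Set.Icc (0:ℝ) T := ⟨hs.1.le, hs.2.le⟩
        have hus : 0 < u s := hupos s hsmem
        rw [(hFderiv s hs).deriv]
        have hsu : 0 < Real.sqrt (u s) := Real.sqrt_pos.mpr hus
        have hgle : g s ≤ Real.sqrt (2 * A * u s) := by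
          rw [Real.le_sqrt (hgnn s hsmem)]
          have hiq : g s ^ 2 ≤ 2 * A * ξ s := hineq s hsmem
          have huexp : u s = ξ s + ε := rfl
          have h2Aε : 0 ≤ 2 * A * ε := by positivity
          rw [huexp]; nlinarith
          exact mul_nonneg (by linarith : (0:ℝ) ≤ 2 * A) hus.le
        have hsplit : Real.sqrt (2 * A * u s)
            = 2 * Real.sqrt (A / 2) * Real.sqrt (u s) := by
          rw [Real.sqrt_mul (by linarith : (0:ℝ) ≤ 2 * A)]
          congr 1
          rw [show (2:ℝ) * A = 4 * (A / 2) by ring,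
            Real.sqrt_mul (by norm_num : (0:ℝ) ≤ 4),
            show (4:ℝ) = 2 ^ 2 by norm_num, Real.sqrt_sq (by norm_num : (0:ℝ) ≤ 2)]
        rw [sub_nonneg, div_le_iff₀ (by positivity)]
        calc g s ≤ Real.sqrt (2 * A * u s) := hgle
          _ = Real.sqrt (A/2) * (2 * Real.sqrt (u s)) := by rw [hsplit]; ring
    -- apply monotonicity between 0 and t
    have h0T : (0:ℝ) ∈ Set.Icc (0:ℝ) T := ⟨le_rfl, hT.le⟩
    have hF0 : F 0 ≤ F t := hFmono h0T ht ht.1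
    have hFeval : F 0 = - Real.sqrt ε := by
      simp [hF, hu, hξ0]
    have hsut : Real.sqrt (u t) ≤ Real.sqrt (A/2) * t + Real.sqrt ε := by
      rw [hFeval] at hF0
      simp only [hF] at hF0
      linarith
    have hut : u t ≤ (Real.sqrt (A/2) * t + Real.sqrt ε) ^ 2 := by
      have h := pow_le_pow_left₀ (Real.sqrt_nonneg (u t)) hsut 2
      rwa [Real.sq_sqrt (hupos t ht).le] at h
    have hexp : (Real.sqrt (A/2) * t + Real.sqrt ε) ^ 2
        = A * t ^ 2 / 2 + Real.sqrt (2*A) * t * Real.sqrt ε + ε := by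
      have h1 : Real.sqrt (A/2) ^ 2 = A / 2 := Real.sq_sqrt (by linarith)
      have h2 : Real.sqrt ε ^ 2 = ε := Real.sq_sqrt hε.le
      have h3 : 2 * Real.sqrt (A/2) = Real.sqrt (2*A) := by
        rw [show (2:ℝ) * A = 4 * (A / 2) by ring,
          Real.sqrt_mul (by norm_num : (0:ℝ) ≤ 4),
          show (4:ℝ) = 2 ^ 2 by norm_num, Real.sqrt_sq (by norm_num : (0:ℝ) ≤ 2)]
      have hring : (Real.sqrt (A/2) * t + Real.sqrt ε) ^ 2
          = Real.sqrt (A/2) ^ 2 * t ^ 2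
            + (2 * Real.sqrt (A/2)) * t * Real.sqrt ε + Real.sqrt ε ^ 2 := by ring
      rw [hring, h1, h2, h3]; ring
    have huexp : u t = ξ t + ε := rfl
    rw [huexp, hexp] at hut
    linarith
  -- pass to the limit ε → 0
  intro t ht
  refine le_of_forall_pos_le_add ?_
  intro δ hδ
  set C : ℝ := Real.sqrt (2*A) * t with hC
  have hCnn : 0 ≤ C := mul_nonneg (Real.sqrt_nonneg _) ht.1
  set ε : ℝ := min (δ/2) ((δ / (2 * (C + 1))) ^ 2) with hεdef
  have hεpos : 0 < ε := lt_min (by linarith) (by positivity)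
  have h1 := key ε hεpos t ht
  have h2 : Real.sqrt ε ≤ δ / (2 * (C + 1)) := by
    calc Real.sqrt ε ≤ Real.sqrt ((δ / (2 * (C + 1))) ^ 2) :=
          Real.sqrt_le_sqrt (min_le_right _ _)
      _ = δ / (2 * (C + 1)) := Real.sqrt_sq (by positivity)
  have h3 : C * Real.sqrt ε ≤ δ / 2 := by
    have hstep : C * Real.sqrt ε ≤ C * (δ / (2 * (C + 1))) :=
      mul_le_mul_of_nonneg_left h2 hCnn
    have he : 2 * (C + 1) * (δ / (2 * (C + 1))) = δ := by field_simp
    have hen : 0 ≤ δ / (2 * (C + 1)) := by positivity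
    have hhint : C * (δ / (2 * (C + 1))) ≤ (C + 1) * (δ / (2 * (C + 1))) :=
      mul_le_mul_of_nonneg_right (by linarith) hen
    linarith
  have h4 : ε ≤ δ / 2 := min_le_left _ _
  calc ξ t ≤ A * t ^ 2 / 2 + C * Real.sqrt ε + ε := by rw [hC]; exact h1
    _ ≤ A * t ^ 2 / 2 + δ / 2 + δ / 2 := by linarith
    _ = A * t ^ 2 / 2 + δ := by ring
end

section
/- Let T > 0 and let g : ℝ → ℝ be continuous and nonnegative on [0,T]. Suppose there are constants M ≥ 0 and K ≥ 0 with M·K·T² < 2 such that g(t)² ≤ 2·M·K·(∫₀^T g(s) ds)·(∫₀^t g(s) ds) for all t ∈ [0,T]. Then g(t) = 0 for all t ∈ [0,T]. -/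
/-!
With `ξ(t) = ∫₀ᵗ g` and `C = 2 M K ξ(T)`, the hypothesis says `ξ' = g ≤ √(C ξ)` with `ξ(0) = 0`.
Comparing `√ξ` with the maximal solution `√C t / 2` of this differential inequality gives
`ξ(t) ≤ C t² / 4`; at `t = T` this reads `ξ(T) ≤ (M K T² / 2) ξ(T)`, so `ξ(T) = 0` since
`M K T² < 2`, and then the hypothesis gives `g² ≤ 0`.
-/

open MeasureTheory intervalIntegral Set

theorem ContinuousOn.hasDerivAt_integral_of_mem_Ioo {g : ℝ → ℝ} {a b t : ℝ}
    (hg : ContinuousOn g (Icc a b)) (ht : t ∈ Ioo a b) :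
    HasDerivAt (fun u => ∫ s in a..u, g s) (g t) t := by
  have hgat : ContinuousOn g (uIcc a t) := by
    rw [uIcc_of_le ht.1.le]
    exact hg.mono (Icc_subset_Icc_right ht.2.le)
  exact integral_hasDerivAt_right hgat.intervalIntegrable
    ((hg.mono Ioo_subset_Icc_self).stronglyMeasurableAtFilter isOpen_Ioo t ht)
    ((hg t (Ioo_subset_Icc_self ht)).continuousAt (Icc_mem_nhds ht.1 ht.2))

theorem sqrt_le_of_hasDerivAt_le_mul_sqrt {f f' : ℝ → ℝ} {a T : ℝ} (ha : 0 ≤ a)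
    (hf : ContinuousOn f (Icc 0 T)) (hf' : ∀ t ∈ Ioo 0 T, HasDerivAt f (f' t) t)
    (hnn : ∀ t ∈ Ioo 0 T, 0 ≤ f t) (hbound : ∀ t ∈ Ioo 0 T, f' t ≤ a * √(f t))
    (h0 : f 0 = 0) {t : ℝ} (ht : t ∈ Icc 0 T) : √(f t) ≤ a * t / 2 := by
  refine le_of_forall_pos_le_add fun δ hδ => ?_
  -- Unlike `√f`, the regularisation `√(f + δ²)` stays differentiable where `f` vanishes.
  set G : ℝ → ℝ := fun s => √(f s + δ ^ 2)
  have hG' : ∀ s ∈ Ioo 0 T, HasDerivAt G (f' s / (2 * √(f s + δ ^ 2))) s := fun s hs =>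
    ((hf' s hs).add_const _).sqrt (by nlinarith [hnn s hs])
  have hG'_le : ∀ s ∈ Ioo 0 T, deriv G s ≤ a / 2 := by
    intro s hs
    have hpos : 0 < √(f s + δ ^ 2) := Real.sqrt_pos.2 (by nlinarith [hnn s hs])
    rw [(hG' s hs).deriv, div_le_iff₀ (by positivity)]
    calc f' s ≤ a * √(f s) := hbound s hs
      _ ≤ a * √(f s + δ ^ 2) := by gcongr; linarith [sq_nonneg δ]
      _ = a / 2 * (2 * √(f s + δ ^ 2)) := by ring
  have hG_incr : G t - G 0 ≤ a / 2 * (t - 0) := by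
    refine (convex_Icc 0 T).image_sub_le_mul_sub_of_deriv_le (hf.add continuousOn_const).sqrt
      ?_ ?_ 0 (left_mem_Icc.2 (ht.1.trans ht.2)) t ht ht.1
    · rw [interior_Icc]
      exact fun s hs => (hG' s hs).differentiableAt.differentiableWithinAt
    · rwa [interior_Icc]
  have hG0 : G 0 = δ := by simp only [G, h0, zero_add, Real.sqrt_sq hδ.le]
  calc √(f t) ≤ G t := Real.sqrt_le_sqrt (by linarith [sq_nonneg δ])
    _ ≤ a * t / 2 + δ := by linarith

theorem le_mul_sq_div_four_of_hasDerivAt_sq_le {f f' : ℝ → ℝ} {c T : ℝ} (hc : 0 ≤ c)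
    (hf : ContinuousOn f (Icc 0 T)) (hf' : ∀ t ∈ Ioo 0 T, HasDerivAt f (f' t) t)
    (hnn : ∀ t ∈ Ioo 0 T, 0 ≤ f t) (hbound : ∀ t ∈ Ioo 0 T, f' t ^ 2 ≤ c * f t)
    (h0 : f 0 = 0) {t : ℝ} (ht : t ∈ Icc 0 T) : f t ≤ c * t ^ 2 / 4 := by
  rcases lt_or_ge (f t) 0 with hneg | hft
  · exact hneg.le.trans (by positivity)
  have hsqrt := sqrt_le_of_hasDerivAt_le_mul_sqrt (Real.sqrt_nonneg c) hf hf' hnn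
    (fun s hs => (le_abs_self _).trans
      ((Real.abs_le_sqrt (hbound s hs)).trans_eq (Real.sqrt_mul hc _))) h0 ht
  calc f t = √(f t) ^ 2 := (Real.sq_sqrt hft).symm
    _ ≤ (√c * t / 2) ^ 2 := pow_le_pow_left₀ (Real.sqrt_nonneg _) hsqrt 2
    _ = c * t ^ 2 / 4 := by rw [div_pow, mul_pow, Real.sq_sqrt hc]; ring

/-- The integral-inequality argument concluding the uniqueness theorem:
if `g ≥ 0` is continuous on `[0,T]`, `M K T² < 2`, and
`g(t)² ≤ 2 M K (∫₀ᵀ g)(∫₀ᵗ g)` on `[0,T]`, then `g ≡ 0` on `[0,T]`. -/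
theorem stmt_10 (T : ℝ) (hT : 0 < T)
    (g : ℝ → ℝ) (hgc : ContinuousOn g (Set.Icc 0 T))
    (hgnn : ∀ t ∈ Set.Icc (0 : ℝ) T, 0 ≤ g t)
    (M K : ℝ) (hM : 0 ≤ M) (hK : 0 ≤ K) (hMKT : M * K * T ^ 2 < 2)
    (hineq : ∀ t ∈ Set.Icc (0 : ℝ) T,
      (g t) ^ 2 ≤ 2 * M * K * (∫ s in (0 : ℝ)..T, g s) * ∫ s in (0 : ℝ)..t, g s) :
    ∀ t ∈ Set.Icc (0 : ℝ) T, g t = 0 := by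
  set ξ : ℝ → ℝ := fun t => ∫ s in (0 : ℝ)..t, g s
  have hξ_cont : ContinuousOn ξ (Icc 0 T) := by
    rw [← uIcc_of_le hT.le]
    exact continuousOn_primitive_interval (by rw [uIcc_of_le hT.le]; exact hgc.integrableOn_Icc)
  have hξ_nn : ∀ t ∈ Icc 0 T, 0 ≤ ξ t := fun t ht =>
    integral_nonneg ht.1 fun s hs => hgnn s ⟨hs.1, hs.2.trans ht.2⟩
  have hT_mem : T ∈ Icc 0 T := right_mem_Icc.2 hT.le
  have hξT : ξ T ≤ 2 * M * K * ξ T * T ^ 2 / 4 :=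
    le_mul_sq_div_four_of_hasDerivAt_sq_le (by have := hξ_nn T hT_mem; positivity) hξ_cont
      (fun t ht => hgc.hasDerivAt_integral_of_mem_Ioo ht)
      (fun t ht => hξ_nn t (Ioo_subset_Icc_self ht)) (fun t ht => hineq t (Ioo_subset_Icc_self ht))
      integral_same hT_mem
  have hξT_zero : ξ T = 0 := by nlinarith [hξ_nn T hT_mem]
  intro t ht
  have hg_sq : g t ^ 2 ≤ 0 := by simpa [ξ, hξT_zero] using hineq t ht
  exact pow_eq_zero_iff two_ne_zero |>.mp (le_antisymm hg_sq (sq_nonneg _))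
end
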